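/- Let M be a real symmetric n×n matrix, y ∈ ℝⁿ, ξ ∈ ℝ, and z ∈ ℂ with Im z ≠ 0. Then |Tr( (M + ξ y yᵀ − z I_n)⁻¹ − (M − z I_n)⁻¹ )| ≤ |ξ| ‖y‖₂² / (Im z)². -/

import Mathlib

open MeasureTheory ProbabilityTheory Filter Matrix

noncomputable section

/-- The empirical spectral distribution of a Hermitian (symmetric) real matrix:
`(card ι)⁻¹ ∑ i δ_{λ_i}` where `λ_i` are the eigenvalues. (Junk value `0` if the
matrix is not Hermitian.) -/
noncomputable def esd {ι : Type*} [Fintype ι] [DecidableEq ι] (M : Matrix ι ι ℝ) :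
    Measure ℝ :=
  if h : M.IsHermitian then
    ((Fintype.card ι : ENNReal))⁻¹ • ∑ i : ι, MeasureTheory.Measure.dirac (h.eigenvalues i)
  else 0

/-- The Stieltjes transform of a (non-negative Borel) measure on `ℝ`. -/
noncomputable def stieltjesT (N : Measure ℝ) (z : ℂ) : ℂ :=
  ∫ t : ℝ, ((t : ℂ) - z)⁻¹ ∂N

/-- `f` belongs to the class of Stieltjes transforms of finite non-negative Borel
measures on `ℝ` (for `Im z ≠ 0`). -/
def IsStieltjesTransform (f : ℂ → ℂ) : Prop :=
  ∃ N : Measure ℝ, IsFiniteMeasure N ∧ ∀ z : ℂ, z.im ≠ 0 → f z = stieltjesT N z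

/-- The `ℓ²→ℓ²` operator norm of a real matrix. -/
noncomputable def opNorm {ι : Type*} [Fintype ι] [DecidableEq ι] (D : Matrix ι ι ℝ) : ℝ :=
  ‖(Matrix.toEuclideanCLM (𝕜 := ℝ) D : EuclideanSpace ℝ ι →L[ℝ] EuclideanSpace ℝ ι)‖

/-- The Hilbert–Schmidt (Frobenius) norm of a real matrix. -/
noncomputable def hsNorm {ι : Type*} [Fintype ι] (B : Matrix ι ι ℝ) : ℝ :=
  Real.sqrt (∑ i : ι, ∑ j : ι, (B i j) ^ 2)

/-- Variance of a real random variable: `E (X - E X)²`. -/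
noncomputable def rvar {Ω : Type*} [MeasurableSpace Ω] (P : Measure Ω) (X : Ω → ℝ) : ℝ :=
  ∫ ω, (X ω - ∫ ω', X ω' ∂P) ^ 2 ∂P

/-- Variance of a complex random variable: `E |X - E X|²`. -/
noncomputable def cvar {Ω : Type*} [MeasurableSpace Ω] (P : Measure Ω) (X : Ω → ℂ) : ℝ :=
  ∫ ω, ‖X ω - ∫ ω', X ω' ∂P‖ ^ 2 ∂P

/-- The (uncentered) covariance matrix `Q = E[y yᵀ]` of a random vector. -/
noncomputable def covMatrix {Ω : Type*} [MeasurableSpace Ω] (P : Measure Ω) {ι : Type*}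
    [Fintype ι] (y : Ω → ι → ℝ) : Matrix ι ι ℝ :=
  Matrix.of fun i j => ∫ ω, y ω i * y ω j ∂P

/-- The cross-covariance matrix `E[x yᵀ]` of two random vectors. -/
noncomputable def crossCovMatrix {Ω : Type*} [MeasurableSpace Ω] (P : Measure Ω) {ι : Type*}
    [Fintype ι] (x y : Ω → ι → ℝ) : Matrix ι ι ℝ :=
  Matrix.of fun i j => ∫ ω, x ω i * y ω j ∂P

/-- Integral of a real function against a signed measure (via its Jordan decomposition). -/
noncomputable def sintegral (ν : MeasureTheory.SignedMeasure ℝ) (f : ℝ → ℝ) : ℝ :=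
  (∫ x, f x ∂ν.toJordanDecomposition.posPart) - ∫ x, f x ∂ν.toJordanDecomposition.negPart

/-- Integral of a complex function against a signed measure (via its Jordan decomposition). -/
noncomputable def sintegralC (ν : MeasureTheory.SignedMeasure ℝ) (f : ℝ → ℂ) : ℂ :=
  (∫ x, f x ∂ν.toJordanDecomposition.posPart) - ∫ x, f x ∂ν.toJordanDecomposition.negPart

/-- Convergence in probability (to a constant) of a sequence of real random variables, each
defined on its own probability space. -/
def TendstoInProb {Ω : ℕ → Type*} [∀ n, MeasurableSpace (Ω n)]
    (P : ∀ n, Measure (Ω n)) (X : ∀ n, Ω n → ℝ) (c : ℝ) : Prop :=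
  ∀ ε : ℝ, 0 < ε → Tendsto (fun n => P n {ω | ε ≤ |X n ω - c|}) atTop (nhds 0)

/-- Weak convergence in probability of random measures `μ n` to a deterministic measure `N`:
for every bounded continuous test function, the integrals converge in probability. -/
def WeakTendstoInProb {Ω : ℕ → Type*} [∀ n, MeasurableSpace (Ω n)]
    (P : ∀ n, Measure (Ω n)) (μ : ∀ n, Ω n → Measure ℝ) (N : Measure ℝ) : Prop :=
  ∀ φ : ℝ → ℝ, Continuous φ → (∃ C : ℝ, ∀ x, |φ x| ≤ C) →
    TendstoInProb P (fun n ω => ∫ x, φ x ∂(μ n ω)) (∫ x, φ x ∂N)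

/-- The resolvent `(M - z)⁻¹` of a real matrix, viewed as a complex matrix. -/
noncomputable def resolventM {ι : Type*} [Fintype ι] [DecidableEq ι]
    (M : Matrix ι ι ℝ) (z : ℂ) : Matrix ι ι ℂ :=
  (M.map (fun a => (a : ℂ)) - z • 1)⁻¹

/-- The bilinear form `(B u, v) = vᵀ B u` for a complex matrix and real vectors. -/
noncomputable def bformC {ι : Type*} [Fintype ι] (B : Matrix ι ι ℂ) (u v : ι → ℝ) : ℂ :=
  dotProduct (fun i => (v i : ℂ)) (B.mulVec fun i => (u i : ℂ))

end

/-! For `A = M + ξ y yᵀ - z` and `B = M - z`, the resolvent identity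
`A⁻¹ - B⁻¹ = A⁻¹ (B - A) B⁻¹` with `B - A = -ξ y yᵀ` of rank one turns the trace into
`-ξ ⟨y, B⁻¹ A⁻¹ y⟩`. Each resolvent of a Hermitian matrix has ℓ² operator norm at
most `1 / |Im z|`, because `Im ⟪x, (H - z) x⟫ = -Im z ‖x‖²` while `⟪x, H x⟫` is real. -/

open scoped Matrix.Norms.L2Operator ComplexInnerProductSpace

theorem LinearMap.IsSymmetric.abs_im_mul_norm_le_norm_sub_smul {E : Type*} [NormedAddCommGroup E]
    [InnerProductSpace ℂ E] {T : E →ₗ[ℂ] E} (hT : T.IsSymmetric) (z : ℂ) (x : E) :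
    |z.im| * ‖x‖ ≤ ‖T x - z • x‖ := by
  have him : (⟪x, T x - z • x⟫).im = -(z.im * ‖x‖ ^ 2) := by
    have hreal : (⟪x, T x⟫).im = 0 := hT.im_inner_self_apply x
    rw [inner_sub_right, inner_smul_right, inner_self_eq_norm_sq_to_K, Complex.sub_im, hreal]
    simp [← Complex.ofReal_pow]
  have hcs : |z.im| * ‖x‖ ^ 2 ≤ ‖x‖ * ‖T x - z • x‖ :=
    calc |z.im| * ‖x‖ ^ 2 = |(⟪x, T x - z • x⟫).im| := by rw [him, abs_neg, abs_mul, abs_sq]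
      _ ≤ ‖⟪x, T x - z • x⟫‖ := Complex.abs_im_le_norm _
      _ ≤ ‖x‖ * ‖T x - z • x‖ := norm_inner_le_norm _ _
  rcases (norm_nonneg x).eq_or_lt with hx | hx
  · rw [← hx, mul_zero]
    exact norm_nonneg _
  · nlinarith

namespace Matrix

variable {ι : Type*} [Fintype ι] [DecidableEq ι]

theorem trace_inv_add_smul_vecMulVec_sub_inv {α : Type*} [CommRing α] {B : Matrix ι ι α} (c : α)
    (u v : ι → α) (h : IsUnit (B + c • vecMulVec u v) ↔ IsUnit B) :
    trace ((B + c • vecMulVec u v)⁻¹ - B⁻¹) =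
      -(c * (v ⬝ᵥ (B⁻¹ * (B + c • vecMulVec u v)⁻¹) *ᵥ u)) := by
  rw [inv_sub_inv h, sub_add_cancel_left, trace_mul_cycle, Matrix.mul_neg, trace_neg,
    Matrix.mul_smul, trace_smul, mul_vecMulVec, trace_vecMulVec, dotProduct_comm, smul_eq_mul]

theorem norm_star_dotProduct_mulVec_le {𝕜 : Type*} [RCLike 𝕜] (P : Matrix ι ι 𝕜) (u w : ι → 𝕜) :
    ‖star u ⬝ᵥ P *ᵥ w‖ ≤ ‖WithLp.toLp 2 u‖ * ‖P‖ * ‖WithLp.toLp 2 w‖ := by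
  have hinner : star u ⬝ᵥ P *ᵥ w =
      inner 𝕜 (WithLp.toLp 2 u) (toEuclideanCLM (𝕜 := 𝕜) P (WithLp.toLp 2 w)) := by
    rw [toEuclideanCLM_toLp, EuclideanSpace.inner_toLp_toLp, dotProduct_comm]
  rw [hinner, mul_assoc]
  exact (norm_inner_le_norm _ _).trans
    (mul_le_mul_of_nonneg_left ((toEuclideanCLM (𝕜 := 𝕜) P).le_opNorm _) (norm_nonneg _))

namespace IsHermitian

variable {H : Matrix ι ι ℂ}

theorem abs_im_mul_norm_le_norm_toEuclideanCLM_sub_smul_one (hH : H.IsHermitian) (z : ℂ)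
    (x : EuclideanSpace ℂ ι) : |z.im| * ‖x‖ ≤ ‖toEuclideanCLM (𝕜 := ℂ) (H - z • 1) x‖ := by
  have hT : IsSelfAdjoint (toEuclideanCLM (𝕜 := ℂ) H) := hH.isSelfAdjoint.map _
  simpa using hT.isSymmetric.abs_im_mul_norm_le_norm_sub_smul z x

theorem isUnit_sub_smul_one (hH : H.IsHermitian) {z : ℂ} (hz : z.im ≠ 0) :
    IsUnit (H - z • 1) := by
  rw [← mulVec_injective_iff_isUnit]
  intro a b hab
  have h := hH.abs_im_mul_norm_le_norm_toEuclideanCLM_sub_smul_one z (WithLp.toLp 2 (a - b))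
  rw [toEuclideanCLM_toLp, mulVec_sub, hab, sub_self, WithLp.toLp_zero, norm_zero,
    ← mul_zero |z.im|] at h
  have hzero := norm_le_zero_iff.1 (le_of_mul_le_mul_left h (abs_pos.2 hz))
  rwa [WithLp.toLp_eq_zero, sub_eq_zero] at hzero

theorem norm_inv_sub_smul_one_le (hH : H.IsHermitian) {z : ℂ} (hz : z.im ≠ 0) :
    ‖(H - z • 1)⁻¹‖ ≤ |z.im|⁻¹ := by
  have hdet := (isUnit_iff_isUnit_det _).1 (hH.isUnit_sub_smul_one hz)
  rw [← l2_opNorm_toEuclideanCLM]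
  refine ContinuousLinearMap.opNorm_le_bound _ (by positivity) fun w => ?_
  have h := hH.abs_im_mul_norm_le_norm_toEuclideanCLM_sub_smul_one z
    (toEuclideanCLM (𝕜 := ℂ) (H - z • 1)⁻¹ w)
  rw [← mul_apply_eq_comp, ← map_mul, mul_nonsing_inv _ hdet, map_one, one_apply_eq_self] at h
  rwa [inv_mul_eq_div, le_div_iff₀' (abs_pos.2 hz)]

theorem norm_trace_inv_add_smul_vecMulVec_sub_inv_le (hH : H.IsHermitian) {z : ℂ}
    (hz : z.im ≠ 0) (ξ : ℝ) (u : ι → ℂ) :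
    ‖trace ((H + (ξ : ℂ) • vecMulVec u (star u) - z • 1)⁻¹ - (H - z • 1)⁻¹)‖ ≤
      |ξ| * ‖WithLp.toLp 2 u‖ ^ 2 / z.im ^ 2 := by
  have hH' : (H + (ξ : ℂ) • vecMulVec u (star u)).IsHermitian := by
    refine hH.add (IsHermitian.smul ?_ (Complex.conj_ofReal ξ))
    rw [IsHermitian, conjTranspose_vecMulVec, star_star]
  have hunit : IsUnit (H - z • 1 + (ξ : ℂ) • vecMulVec u (star u)) ↔ IsUnit (H - z • 1) := by
    rw [← add_sub_right_comm]
    exact iff_of_true (hH'.isUnit_sub_smul_one hz) (hH.isUnit_sub_smul_one hz)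
  rw [add_sub_right_comm, trace_inv_add_smul_vecMulVec_sub_inv _ _ _ hunit, ← add_sub_right_comm,
    norm_neg, norm_mul, Complex.norm_real, Real.norm_eq_abs]
  calc _ ≤ |ξ| * (‖WithLp.toLp 2 u‖ * (|z.im|⁻¹ * |z.im|⁻¹) * ‖WithLp.toLp 2 u‖) := by
        gcongr
        refine (norm_star_dotProduct_mulVec_le _ _ _).trans ?_
        gcongr
        exact (l2_opNorm_mul _ _).trans <| mul_le_mul (hH.norm_inv_sub_smul_one_le hz)
          (hH'.norm_inv_sub_smul_one_le hz) (norm_nonneg _) (by positivity)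
    _ = |ξ| * ‖WithLp.toLp 2 u‖ ^ 2 / z.im ^ 2 := by
        rw [← sq_abs z.im]
        field_simp

end IsHermitian

end Matrix

/-- `|Tr((M + ξ y yᵀ − z)⁻¹ − (M − z)⁻¹)| ≤ |ξ| ‖y‖₂² / (Im z)²`. -/
theorem trace_rank_one_resolvent_bound (n : ℕ) (M : Matrix (Fin n) (Fin n) ℝ)
    (hM : M.IsHermitian) (y : Fin n → ℝ) (ξ : ℝ) (z : ℂ) (hz : z.im ≠ 0) :
    ‖Matrix.trace
        (resolventM (M + ξ • Matrix.vecMulVec y y) z - resolventM M z)‖ ≤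
      |ξ| * (∑ i, y i ^ 2) / z.im ^ 2 := by
  set yc : Fin n → ℂ := fun i => (y i : ℂ)
  have hperturb : (M + ξ • vecMulVec y y).map ((↑) : ℝ → ℂ) =
      M.map (↑) + (ξ : ℂ) • vecMulVec yc (star yc) := by
    ext i j
    simp [yc, vecMulVec_apply]
  have hnorm : ‖WithLp.toLp 2 yc‖ ^ 2 = ∑ i, y i ^ 2 := by
    simp [EuclideanSpace.norm_sq_eq, yc]
  have hMc : (M.map ((↑) : ℝ → ℂ)).IsHermitian := hM.map _ fun _ => (Complex.conj_ofReal _).symm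
  rw [resolventM, resolventM, hperturb, ← hnorm]
  exact hMc.norm_trace_inv_add_smul_vecMulVec_sub_inv_le hz ξ yc
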